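/- In the complex number system, suppose s, o₁, o₂, r₁, r₂, τ₁, τ₂ are complex numbers satisfying s·τ₁ + r₁ = conj(o₁)·conj(τ₁), s·τ₂ + r₂ = conj(o₁)·conj(τ₂), s·τ₁ + r₁ = conj(o₂)·conj(τ₁), and s·τ₂ + r₂ = conj(o₂)·conj(τ₂). If conj(τ₂) − conj(τ₁) ≠ 0, then o₁ = o₂. -/
import Mathlib

theorem tero_cannot_model_temporal_evolution
    (s o₁ o₂ r₁ r₂ τ₁ τ₂ : ℂ)
    (h₁ : s * τ₁ + r₁ = star o₁ * star τ₁)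
    (h₂ : s * τ₂ + r₂ = star o₁ * star τ₂)
    (h₃ : s * τ₁ + r₁ = star o₂ * star τ₁)
    (h₄ : s * τ₂ + r₂ = star o₂ * star τ₂)
    (hτ : star τ₂ - star τ₁ ≠ 0) :
    o₁ = o₂ := by
  have key : (star o₁ - star o₂) * (star τ₂ - star τ₁) = 0 := by
    have e1 : star o₁ * star τ₁ = star o₂ * star τ₁ := h₁ ▸ h₃
    have e2 : star o₁ * star τ₂ = star o₂ * star τ₂ := h₂ ▸ h₄
    ring_nf
    linear_combination e2 - e1
  have := mul_eq_zero.mp key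
  rcases this with h | h
  · exact star_injective (sub_eq_zero.mp h)
  · exact absurd h hτ
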